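/- arXiv:1906.06776 — 4 statements merged into one kernel-verified Lean document; each statement's English description precedes it below -/
import Mathlib

section
/- For every z > 0 and σ > 0, if X is a Gaussian random variable with mean z and variance σ², then E[1 − tanh(z·X/σ²)] ≤ exp(−z²/(2σ²)). Consequently, for the standard Gaussian density f(x) = (2π)^{−1/2}·exp(−x²/2) in the class F, the LS-EM contraction factor satisfies κ(β*, β, σ) ≤ exp(−min(β, β*)²/(2σ²)) for all β, β* > 0. -/
open MeasureTheory Real Filter

noncomputable section

/-- The base log-concave density `f(x) = (1/C) * exp(-g(|x|))`. -/
def dens (g : ℝ → ℝ) (C : ℝ) (x : ℝ) : ℝ := (1 / C) * Real.exp (-g |x|)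

/-- The location-scale density `f_{β,σ}(x) = (1/σ) f((x-β)/σ)`. -/
def densLS (g : ℝ → ℝ) (C σ β : ℝ) (x : ℝ) : ℝ := (1 / σ) * dens g C ((x - β) / σ)

/-- `F_{β,σ}(x) = g(|x+β|/σ) - g(|x-β|/σ)`. -/
def Ffun (g : ℝ → ℝ) (σ β x : ℝ) : ℝ := g (|x + β| / σ) - g (|x - β| / σ)

/-- The population LS-EM update `M(β*, β) = E_{X ~ f_{β*,σ}}[X tanh(F_{β,σ}(X)/2)]`. -/
def Mfun (g : ℝ → ℝ) (C σ βs β : ℝ) : ℝ :=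
  ∫ x : ℝ, densLS g C σ βs x * (x * Real.tanh (Ffun g σ β x / 2))

/-- The contraction factor `κ(β*, β, σ) = E_{X ~ f_{z,σ}}[1 - tanh(F_{z,σ}(X)/2)]`,
where `z = min(|β|, |β*|)`. -/
def kappa (g : ℝ → ℝ) (C σ βs β : ℝ) : ℝ :=
  ∫ x : ℝ, densLS g C σ (min |β| |βs|) x *
    (1 - Real.tanh (Ffun g σ (min |β| |βs|) x / 2))

/-- Membership in the class `F` of rotation invariant (symmetric) log-concave densities
with unit variance: `f(x) = (1/C) exp(-g(|x|))` with `g` convex and strictly increasing on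
`[0, ∞)`, `g(0) = 0`, integrating to one and with unit second moment. -/
structure InClassF (g : ℝ → ℝ) (C : ℝ) : Prop where
  convexOn : ConvexOn ℝ (Set.Ici (0 : ℝ)) g
  strictMonoOn : StrictMonoOn g (Set.Ici (0 : ℝ))
  g_zero : g 0 = 0
  C_pos : 0 < C
  integral_one : ∫ x : ℝ, dens g C x = 1
  variance_one : ∫ x : ℝ, x ^ 2 * dens g C x = 1

/-- The regularity condition: differentiation under the integral sign is valid for the
integrals defining `M`, with respect to both the location parameter of the sampling
density and the current iterate. -/
def Regular (g : ℝ → ℝ) (C σ : ℝ) : Prop :=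
  (∀ β z : ℝ, HasDerivAt (fun z' => Mfun g C σ z' β)
      (∫ x : ℝ, deriv (fun z' => densLS g C σ z' x) z *
        (x * Real.tanh (Ffun g σ β x / 2))) z) ∧
  (∀ βs b : ℝ, HasDerivAt (fun b' => Mfun g C σ βs b')
      (∫ x : ℝ, densLS g C σ βs x *
        (x * deriv (fun b' => Real.tanh (Ffun g σ b' x / 2)) b)) b)

/-!
Since `1 - tanh t = e^{-t} / cosh t ≤ e^{-t}`, the expectation is at most `E[e^{-zX/σ²}]`,
and tilting the `N(z, σ²)` density by `e^{-zx/σ²}` gives `e^{-z²/(2σ²)}` times the `N(0, σ²)`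
density.
For the standard Gaussian in `F` (`g(t) = t²/2`), `F_{z,σ}(x)/2 = zx/σ²` and `f_{z,σ}` is the
`N(z, σ²)` density, so `κ` is exactly this expectation with `z = min(β, β*)`.
-/

open ProbabilityTheory

lemma Real.one_sub_tanh_le_exp_neg (t : ℝ) : 1 - tanh t ≤ exp (-t) := by
  have h : 1 - tanh t = exp (-t) / cosh t := by
    rw [tanh_eq_sinh_div_cosh, ← cosh_sub_sinh]
    field_simp [(cosh_pos t).ne']
  rw [h]
  exact div_le_self (exp_pos _).le (one_le_cosh t)

namespace ProbabilityTheory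

lemma gaussianPDFReal_mul_exp_neg (μ : ℝ) (v : NNReal) (x : ℝ) :
    gaussianPDFReal μ v x * exp (-(μ * x / v)) =
      exp (-μ ^ 2 / (2 * v)) * gaussianPDFReal 0 v x := by
  rcases eq_or_ne v 0 with rfl | hv
  · simp
  have hv' : (v : ℝ) ≠ 0 := by exact_mod_cast hv
  have hexp : -(x - μ) ^ 2 / (2 * v) + -(μ * x / v) =
      -μ ^ 2 / (2 * v) + -(x - 0) ^ 2 / (2 * v) := by
    field_simp
    ring
  simp only [gaussianPDFReal]
  rw [mul_assoc, ← exp_add, hexp, exp_add]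
  ring

lemma integral_gaussianPDFReal_mul_one_sub_tanh_le (μ : ℝ) (v : NNReal) :
    ∫ x, gaussianPDFReal μ v x * (1 - tanh (μ * x / v)) ≤ exp (-μ ^ 2 / (2 * v)) := by
  rcases eq_or_ne v 0 with rfl | hv
  · simp only [gaussianPDFReal_zero_var, Pi.zero_apply, zero_mul, integral_zero]
    positivity
  calc ∫ x, gaussianPDFReal μ v x * (1 - tanh (μ * x / v))
      ≤ ∫ x, gaussianPDFReal μ v x * exp (-(μ * x / v)) := by
        refine integral_mono_of_nonneg (.of_forall fun x => ?_) ?_ (.of_forall fun x => ?_)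
        · exact mul_nonneg (gaussianPDFReal_nonneg _ _ _) (sub_nonneg.2 (tanh_lt_one _).le)
        · simp only [gaussianPDFReal_mul_exp_neg]
          exact (integrable_gaussianPDFReal 0 v).const_mul _
        · exact mul_le_mul_of_nonneg_left (one_sub_tanh_le_exp_neg _)
            (gaussianPDFReal_nonneg _ _ _)
    _ = exp (-μ ^ 2 / (2 * v)) := by
        simp only [gaussianPDFReal_mul_exp_neg]
        rw [integral_const_mul, integral_gaussianPDFReal_eq_one 0 hv, mul_one]

end ProbabilityTheory

lemma densLS_sq_half_eq_gaussianPDFReal {σ : ℝ} (hσ : 0 < σ) (β x : ℝ) :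
    densLS (fun t => t ^ 2 / 2) (√(2 * π)) σ β x =
      gaussianPDFReal β ⟨σ ^ 2, sq_nonneg σ⟩ x := by
  have hsqrt : √(2 * π * σ ^ 2) = √(2 * π) * σ := by
    rw [sqrt_mul (by positivity), sqrt_sq hσ.le]
  have h2π : 0 < √(2 * π) := sqrt_pos.2 (by positivity)
  change 1 / σ * (1 / √(2 * π) * exp (-(|(x - β) / σ| ^ 2 / 2))) =
    (√(2 * π * σ ^ 2))⁻¹ * exp (-(x - β) ^ 2 / (2 * σ ^ 2))
  rw [sq_abs, hsqrt, div_pow]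
  field_simp

lemma Ffun_sq_half_div_two (σ β x : ℝ) :
    Ffun (fun t => t ^ 2 / 2) σ β x / 2 = β * x / σ ^ 2 := by
  simp only [Ffun, div_pow, sq_abs]
  ring

lemma kappa_sq_half_eq_integral_gaussianPDFReal {σ : ℝ} (hσ : 0 < σ) (β βs : ℝ) :
    kappa (fun t => t ^ 2 / 2) (√(2 * π)) σ βs β =
      ∫ x, gaussianPDFReal (min |β| |βs|) ⟨σ ^ 2, sq_nonneg σ⟩ x *
        (1 - tanh (min |β| |βs| * x / σ ^ 2)) := by
  simp only [kappa, densLS_sq_half_eq_gaussianPDFReal hσ, Ffun_sq_half_div_two]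

/-- Gaussian contraction factor: for a Gaussian random variable `X` with
mean `z > 0` and variance `σ²`, `E[1 - tanh(zX/σ²)] ≤ exp(-z²/(2σ²))`; consequently for the
standard Gaussian member of `F` (i.e. `g(t) = t²/2`, `C = √(2π)`), the LS-EM contraction
factor satisfies `κ(β*, β, σ) ≤ exp(-min(β, β*)²/(2σ²))` for all `β, β* > 0`. -/
theorem stmt2 (σ : ℝ) (hσ : 0 < σ) :
    (∀ z : ℝ, 0 < z →
      (∫ x : ℝ, ProbabilityTheory.gaussianPDFReal z ⟨σ ^ 2, sq_nonneg σ⟩ x *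
          (1 - Real.tanh (z * x / σ ^ 2))) ≤ Real.exp (-z ^ 2 / (2 * σ ^ 2))) ∧
    (∀ β βs : ℝ, 0 < β → 0 < βs →
      kappa (fun t => t ^ 2 / 2) (Real.sqrt (2 * π)) σ βs β ≤
        Real.exp (-(min β βs) ^ 2 / (2 * σ ^ 2))) := by
  refine ⟨fun z _ => integral_gaussianPDFReal_mul_one_sub_tanh_le z _, fun β βs hβ hβs => ?_⟩
  rw [kappa_sq_half_eq_integral_gaussianPDFReal hσ, abs_of_pos hβ, abs_of_pos hβs]
  exact integral_gaussianPDFReal_mul_one_sub_tanh_le _ _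
end
end

section
/- For every z > 0, the integral ∫_ℝ [exp(−|x−z|)·exp(−|x+z|)] / [exp(−|x−z|) + exp(−|x+z|)] dx is at most 2·exp(−z)/(1 + exp(−2z)). Consequently, for the Laplace density with scale σ₀ = 1/√2 (so that f(x) = (1/(2σ₀))·exp(−|x|/σ₀) has unit variance and lies in the class F), the LS-EM contraction factor satisfies κ(β*, β, σ) ≤ 2·exp(−√2·z/σ)/(1 + exp(−2√2·z/σ)) with z = min(β, β*), for all β, β* > 0. -/
/-! The overlap integrand is `(exp |x - z| + exp |x + z|)⁻¹`. For `|x| ≥ z` it equals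
`exp (-|x|) / (2 cosh z)`, so the two tails contribute exactly `exp (-z) / cosh z`. On `[-z, z]`
it equals `exp (-z) / (2 cosh x) ≤ exp (-z) / (1 + cosh x)`, whose integral is
`2 exp (-z) tanh (z / 2)`; with `u = exp (-z) ≤ 1` this is at most `(1 - u) / cosh z` because
`u ^ 2 ≤ u`, so the total is at most `1 / cosh z = 2 exp (-z) / (1 + exp (-2 z))`.

For the unit-variance Laplace density, `1 - tanh (F / 2) = 2 / (exp F + 1)` turns the integrand
of `κ` into `√2 / σ` times the overlap integrand at `√2 x / σ`, with `z = √2 min β β* / σ`. -/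

open MeasureTheory Real Filter

noncomputable section

open Set

lemma exp_neg_mul_exp_neg_div_add (a b : ℝ) :
    exp (-a) * exp (-b) / (exp (-a) + exp (-b)) = (exp a + exp b)⁻¹ := by
  rw [exp_neg, exp_neg]
  field_simp
  ring

lemma one_sub_tanh_half (u : ℝ) : 1 - tanh (u / 2) = 2 / (exp u + 1) := by
  have h : exp u = exp (u / 2) ^ 2 := by rw [sq, ← exp_add, add_halves]
  rw [tanh_eq, h, exp_neg]
  field_simp
  ring

lemma inv_exp_add_exp_neg_le (x : ℝ) :
    (exp x + exp (-x))⁻¹ ≤ 2 * exp x / (exp x + 1) ^ 2 := by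
  have hx := exp_pos x
  rw [exp_neg, inv_le_iff_one_le_mul₀ (by positivity), div_mul_eq_mul_div,
    one_le_div₀ (by positivity)]
  field_simp
  nlinarith [sq_nonneg (exp x - 1)]

lemma continuous_two_mul_exp_div_exp_add_one_sq :
    Continuous fun x => 2 * exp x / (exp x + 1) ^ 2 :=
  Continuous.div (by fun_prop) (by fun_prop) fun x => by positivity

lemma integral_two_mul_exp_div_exp_add_one_sq (a b : ℝ) :
    ∫ x in a..b, 2 * exp x / (exp x + 1) ^ 2 = 2 / (exp a + 1) - 2 / (exp b + 1) := by
  have hderiv (x : ℝ) :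
      HasDerivAt (fun y => -2 * (exp y + 1)⁻¹) (2 * exp x / (exp x + 1) ^ 2) x :=
    ((((hasDerivAt_exp x).add_const 1).inv (by positivity)).const_mul (-2)).congr_deriv
      (by ring)
  rw [intervalIntegral.integral_eq_sub_of_hasDerivAt (fun x _ => hderiv x)
    (continuous_two_mul_exp_div_exp_add_one_sq.intervalIntegrable _ _)]
  ring

lemma exp_neg_mul_two_div_sub_two_div_le {z : ℝ} (hz : 0 ≤ z) :
    exp (-z) * (2 / (exp (-z) + 1) - 2 / (exp z + 1)) ≤
      2 * (1 - exp (-z)) / (exp z + exp (-z)) := by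
  have hu : exp (-z) ≤ 1 := exp_le_one_iff.mpr (by linarith)
  rw [show exp z = (exp (-z))⁻¹ by rw [exp_neg, inv_inv]]
  set u := exp (-z)
  have hu0 : 0 < u := exp_pos _
  have hlhs : u * (2 / (u + 1) - 2 / (u⁻¹ + 1)) = 2 * u * (1 - u) / (1 + u) := by
    field_simp
    ring
  have hrhs : 2 * (1 - u) / (u⁻¹ + u) = 2 * u * (1 - u) / (1 + u ^ 2) := by
    field_simp
  rw [hlhs, hrhs]
  exact div_le_div_of_nonneg_left (by nlinarith) (by positivity) (by nlinarith)

def laplaceOverlap (z x : ℝ) : ℝ := (exp |x - z| + exp |x + z|)⁻¹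

section LaplaceOverlap

variable {z : ℝ}

lemma laplaceOverlap_of_le_neg (hz : 0 ≤ z) {x : ℝ} (hx : x ≤ -z) :
    laplaceOverlap z x = exp x / (exp z + exp (-z)) := by
  have hsum : exp |x - z| + exp |x + z| = exp (-x) * (exp z + exp (-z)) := by
    rw [abs_of_nonpos (by linarith), abs_of_nonpos (by linarith), mul_add, ← exp_add,
      ← exp_add]
    ring_nf
  rw [laplaceOverlap, hsum, mul_inv, exp_neg, inv_inv, div_eq_mul_inv]

lemma laplaceOverlap_of_le (hz : 0 ≤ z) {x : ℝ} (hx : z ≤ x) :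
    laplaceOverlap z x = exp (-x) / (exp z + exp (-z)) := by
  have hsum : exp |x - z| + exp |x + z| = exp x * (exp z + exp (-z)) := by
    rw [abs_of_nonneg (by linarith), abs_of_nonneg (by linarith), mul_add, ← exp_add,
      ← exp_add]
    ring_nf
  rw [laplaceOverlap, hsum, mul_inv, exp_neg x, div_eq_mul_inv]

lemma laplaceOverlap_le_of_mem_Icc {x : ℝ} (hx : x ∈ Icc (-z) z) :
    laplaceOverlap z x ≤ exp (-z) * (2 * exp x / (exp x + 1) ^ 2) := by
  have hsum : exp |x - z| + exp |x + z| = exp z * (exp x + exp (-x)) := by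
    rw [abs_of_nonpos (by linarith [hx.2]), abs_of_nonneg (by linarith [hx.1]), mul_add,
      ← exp_add, ← exp_add]
    ring_nf
  rw [laplaceOverlap, hsum, mul_inv, ← exp_neg]
  exact mul_le_mul_of_nonneg_left (inv_exp_add_exp_neg_le x) (exp_pos _).le

lemma continuous_laplaceOverlap : Continuous (laplaceOverlap z) :=
  Continuous.inv₀ (by fun_prop) fun x => by positivity

lemma integral_Iic_laplaceOverlap (hz : 0 ≤ z) :
    ∫ x in Iic (-z), laplaceOverlap z x = exp (-z) / (exp z + exp (-z)) := by
  rw [setIntegral_congr_fun measurableSet_Iic fun x hx => laplaceOverlap_of_le_neg hz hx,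
    integral_div, integral_exp_Iic]

lemma integral_Ioi_laplaceOverlap (hz : 0 ≤ z) :
    ∫ x in Ioi z, laplaceOverlap z x = exp (-z) / (exp z + exp (-z)) := by
  rw [setIntegral_congr_fun measurableSet_Ioi fun x hx => laplaceOverlap_of_le hz (le_of_lt hx),
    integral_div, integral_exp_neg_Ioi]

lemma intervalIntegral_laplaceOverlap_le (hz : 0 ≤ z) :
    ∫ x in (-z)..z, laplaceOverlap z x ≤ exp (-z) * (2 / (exp (-z) + 1) - 2 / (exp z + 1)) := by
  rw [← integral_two_mul_exp_div_exp_add_one_sq, ← intervalIntegral.integral_const_mul]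
  exact intervalIntegral.integral_mono_on (by linarith)
    (continuous_laplaceOverlap.intervalIntegrable _ _)
    ((continuous_two_mul_exp_div_exp_add_one_sq.intervalIntegrable _ _).const_mul _)
    fun x hx => laplaceOverlap_le_of_mem_Icc hx

lemma integrable_laplaceOverlap (hz : 0 ≤ z) : Integrable (laplaceOverlap z) := by
  have hleft : IntegrableOn (laplaceOverlap z) (Iic (-z)) :=
    IntegrableOn.congr_fun ((integrableOn_exp_Iic _).div_const _)
      (fun x hx => (laplaceOverlap_of_le_neg hz hx).symm) measurableSet_Iic
  have hright : IntegrableOn (laplaceOverlap z) (Ioi z) :=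
    IntegrableOn.congr_fun ((integrableOn_exp_neg_Ioi _).div_const _)
      (fun x hx => (laplaceOverlap_of_le hz (le_of_lt hx)).symm) measurableSet_Ioi
  have hcenter : IntegrableOn (laplaceOverlap z) (Icc (-z) z) :=
    continuous_laplaceOverlap.integrableOn_Icc
  refine integrableOn_univ.mp ((hleft.union (hcenter.union hright)).mono_set fun x _ => ?_)
  simp only [mem_union, mem_Iic, mem_Icc, mem_Ioi]
  grind

theorem integral_laplaceOverlap_le (hz : 0 ≤ z) :
    ∫ x, laplaceOverlap z x ≤ 2 * exp (-z) / (1 + exp (-2 * z)) := by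
  have hint := integrable_laplaceOverlap hz
  have hsplit : ∫ x, laplaceOverlap z x = (∫ x in Iic (-z), laplaceOverlap z x) +
      (∫ x in (-z)..z, laplaceOverlap z x) + ∫ x in Ioi z, laplaceOverlap z x := by
    rw [← intervalIntegral.integral_Iic_add_Ioi (b := -z) hint.integrableOn hint.integrableOn,
      ← intervalIntegral.integral_interval_add_Ioi (b := z) hint.integrableOn hint.integrableOn,
      add_assoc]
  have hrhs : 2 * exp (-z) / (1 + exp (-2 * z)) = 2 / (exp z + exp (-z)) := by
    rw [show -2 * z = -z + -z by ring, exp_add, exp_neg z]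
    field_simp
  rw [hsplit, integral_Iic_laplaceOverlap hz, integral_Ioi_laplaceOverlap hz, hrhs]
  calc _ ≤ exp (-z) / (exp z + exp (-z)) + 2 * (1 - exp (-z)) / (exp z + exp (-z)) +
          exp (-z) / (exp z + exp (-z)) := by
        gcongr
        exact (intervalIntegral_laplaceOverlap_le hz).trans
          (exp_neg_mul_two_div_sub_two_div_le hz)
    _ = 2 / (exp z + exp (-z)) := by
        field_simp
        ring

end LaplaceOverlap

lemma densLS_mul_one_sub_tanh_laplace {σ : ℝ} (hσ : 0 < σ) (z x : ℝ) :
    densLS (fun t => √2 * t) √2 σ z x * (1 - tanh (Ffun (fun t => √2 * t) σ z x / 2)) =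
      √2 / σ * laplaceOverlap (√2 * z / σ) (√2 / σ * x) := by
  have hscale : ∀ y, |√2 / σ * y| = √2 * (|y| / σ) := fun y => by
    rw [abs_mul, abs_of_pos (by positivity)]
    ring
  rw [laplaceOverlap, show √2 / σ * x - √2 * z / σ = √2 / σ * (x - z) by ring,
    show √2 / σ * x + √2 * z / σ = √2 / σ * (x + z) by ring, hscale, hscale, densLS, dens,
    Ffun, abs_div, abs_of_pos hσ, one_sub_tanh_half, exp_sub, exp_neg]
  field_simp
  rw [sq_sqrt zero_le_two]
  ring

lemma kappa_laplace_eq {σ : ℝ} (hσ : 0 < σ) (β βs : ℝ) :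
    kappa (fun t => √2 * t) √2 σ βs β =
      ∫ y, laplaceOverlap (√2 * min |β| |βs| / σ) y := by
  simp_rw [kappa, densLS_mul_one_sub_tanh_laplace hσ]
  rw [integral_const_mul, Measure.integral_comp_mul_left, smul_eq_mul, abs_inv,
    abs_of_pos (by positivity), mul_inv_cancel_left₀ (by positivity)]

/-- Laplace contraction factor: the stated integral bound for every
`z > 0`, and consequently for the unit-variance Laplace member of `F` (scale `σ₀ = 1/√2`,
i.e. `g(t) = √2 t`, `C = √2`), the LS-EM contraction factor satisfies
`κ(β*, β, σ) ≤ 2 exp(-√2 z/σ)/(1 + exp(-2√2 z/σ))` with `z = min(β, β*)`,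
for all `β, β* > 0`. -/
theorem stmt3 (σ : ℝ) (hσ : 0 < σ) :
    (∀ z : ℝ, 0 < z →
      (∫ x : ℝ, Real.exp (-|x - z|) * Real.exp (-|x + z|) /
          (Real.exp (-|x - z|) + Real.exp (-|x + z|))) ≤
        2 * Real.exp (-z) / (1 + Real.exp (-2 * z))) ∧
    (∀ β βs : ℝ, 0 < β → 0 < βs →
      kappa (fun t => Real.sqrt 2 * t) (Real.sqrt 2) σ βs β ≤
        2 * Real.exp (-(Real.sqrt 2 * min β βs) / σ) /
          (1 + Real.exp (-(2 * Real.sqrt 2 * min β βs) / σ))) := by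
  refine ⟨fun z hz => ?_, fun β βs hβ hβs => ?_⟩
  · simp only [exp_neg_mul_exp_neg_div_add]
    exact integral_laplaceOverlap_le hz.le
  · rw [kappa_laplace_eq hσ, abs_of_pos hβ, abs_of_pos hβs]
    convert integral_laplaceOverlap_le (z := √2 * min β βs / σ) (by positivity) using 4 <;>
      ring
end
end

section
/- Let f(x) = exp(x)/(1 + exp(x))² be the standard logistic density. For every z > 0, the quantity 2·∫_ℝ [f(x−z)·f(x+z)] / [f(x−z) + f(x+z)] dx is at most 4/(exp(z) + exp(−z) + 2), which is strictly less than 1. Consequently, for the logistic density with scale σ₀ = √3/π (unit variance, class F), the LS-EM contraction factor satisfies κ(β*, β, σ) ≤ 4·exp(−πz/(σ√3)) / (1 + exp(−2πz/(σ√3)) + 2·exp(−πz/(σ√3))) with z = min(β, β*), for all β, β* > 0. -/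
open MeasureTheory Real Filter

noncomputable section

/-!
Both integrands are, up to a constant, `(1 + cosh u · cosh w)⁻¹` with `u` the rescaled
variable: the logistic density is `(4 cosh² (y/2))⁻¹`, `1 - tanh (log A - log B)` is
`2B² / (A² + B²)`, and `cosh² a + cosh² b = 1 + cosh (a + b) cosh (a - b)` merges the two
shifted copies.
Since `(cosh u - 1)(cosh w - 1) ≥ 0`, this is at most `2 (1 + cosh u)⁻¹ (1 + cosh w)⁻¹`,
and `∫ (1 + cosh u)⁻¹ du = 2` because `2 / (1 + e^{-u})` is an antiderivative.
-/

lemma one_add_sq_le_four_mul_one_add_cosh (x : ℝ) : 1 + x ^ 2 ≤ 4 * (1 + cosh x) := by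
  have h := quadratic_le_exp_of_nonneg (abs_nonneg x)
  rw [← cosh_abs, cosh_eq]
  nlinarith [exp_pos (-|x|), sq_abs x, abs_nonneg x]

lemma integrable_inv_one_add_cosh : Integrable fun x : ℝ => (1 + cosh x)⁻¹ := by
  refine (integrable_inv_one_add_sq.const_mul 4).mono'
    (by fun_prop (disch := intro x; positivity)) (ae_of_all _ fun x => ?_)
  have hpos : 0 < 1 + cosh x := by positivity
  rw [norm_inv, Real.norm_of_nonneg hpos.le]
  calc (1 + cosh x)⁻¹ = 4 * (4 * (1 + cosh x))⁻¹ := by field_simp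
    _ ≤ 4 * (1 + x ^ 2)⁻¹ := by gcongr; exact one_add_sq_le_four_mul_one_add_cosh x

lemma hasDerivAt_two_div_one_add_exp_neg (x : ℝ) :
    HasDerivAt (fun x => 2 / (1 + exp (-x))) (1 + cosh x)⁻¹ x := by
  have h := ((hasDerivAt_neg x).exp.const_add 1).fun_inv (by positivity) |>.const_mul 2
  simp only [div_eq_mul_inv]
  refine h.congr_deriv ?_
  rw [cosh_eq, exp_neg]
  field_simp
  ring

lemma integral_inv_one_add_cosh : ∫ x : ℝ, (1 + cosh x)⁻¹ = 2 := by
  have htop : Tendsto (fun x : ℝ => 2 / (1 + exp (-x))) atTop (nhds 2) := by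
    have := tendsto_const_nhds (x := (2 : ℝ)).div
      ((tendsto_exp_atBot.comp tendsto_neg_atTop_atBot).const_add 1) (by norm_num)
    simpa [Pi.div_def] using this
  have hbot : Tendsto (fun x : ℝ => 2 / (1 + exp (-x))) atBot (nhds 0) :=
    (tendsto_atTop_add_const_left _ 1
      (tendsto_exp_atTop.comp tendsto_neg_atBot_atTop)).const_div_atTop 2
  rw [integral_of_hasDerivAt_of_tendsto hasDerivAt_two_div_one_add_exp_neg
    integrable_inv_one_add_cosh hbot htop, sub_zero]

lemma inv_one_add_cosh_mul_cosh_le (u w : ℝ) :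
    (1 + cosh u * cosh w)⁻¹ ≤ 2 * ((1 + cosh u)⁻¹ * (1 + cosh w)⁻¹) := by
  have hu := one_le_cosh u
  have hw := one_le_cosh w
  rw [← mul_inv, ← div_eq_mul_inv, le_div_iff₀ (by positivity),
    inv_mul_le_iff₀ (by positivity)]
  nlinarith [mul_nonneg (sub_nonneg.2 hu) (sub_nonneg.2 hw)]

lemma integral_inv_one_add_cosh_mul_cosh_le (w : ℝ) :
    ∫ x : ℝ, (1 + cosh x * cosh w)⁻¹ ≤ 4 / (1 + cosh w) :=
  calc ∫ x : ℝ, (1 + cosh x * cosh w)⁻¹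
      ≤ ∫ x : ℝ, 2 * ((1 + cosh x)⁻¹ * (1 + cosh w)⁻¹) :=
        integral_mono_of_nonneg (ae_of_all _ fun x => by positivity)
          ((integrable_inv_one_add_cosh.mul_const _).const_mul 2)
          (ae_of_all _ fun x => inv_one_add_cosh_mul_cosh_le x w)
    _ = 4 / (1 + cosh w) := by
        rw [integral_const_mul, integral_mul_const, integral_inv_one_add_cosh]
        ring

lemma integral_inv_one_add_cosh_div_mul_cosh_le {c : ℝ} (hc : 0 < c) (w : ℝ) :
    ∫ x : ℝ, (1 + cosh (x / c) * cosh w)⁻¹ ≤ 4 * c / (1 + cosh w) := by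
  rw [Measure.integral_comp_div (fun x => (1 + cosh x * cosh w)⁻¹) c, abs_of_pos hc,
    smul_eq_mul, mul_comm 4 c, mul_div_assoc]
  gcongr
  exact integral_inv_one_add_cosh_mul_cosh_le w

lemma four_div_exp_add_exp_neg_add_two (a : ℝ) :
    4 / (exp a + exp (-a) + 2) = 2 / (1 + cosh a) := by
  rw [cosh_eq]
  field_simp
  ring

lemma four_mul_exp_div_one_add_exp_two_mul_add (a : ℝ) :
    4 * exp a / (1 + exp (2 * a) + 2 * exp a) = 2 / (1 + cosh a) := by
  rw [← four_div_exp_add_exp_neg_add_two, two_mul, exp_add, exp_neg]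
  field_simp
  ring

lemma cosh_sq_add_cosh_sq (a b : ℝ) :
    cosh a ^ 2 + cosh b ^ 2 = 1 + cosh (a + b) * cosh (a - b) := by
  rw [cosh_add, cosh_sub]
  linear_combination (-sinh b ^ 2) * cosh_sq a + (1 - cosh a ^ 2) * cosh_sq b

lemma logistic_pdf_eq (y : ℝ) : exp y / (1 + exp y) ^ 2 = (4 * cosh (y / 2) ^ 2)⁻¹ := by
  have hy : exp y = exp (y / 2) ^ 2 := by rw [← exp_nat_mul]; ring_nf
  rw [cosh_eq, exp_neg, hy]
  field_simp
  ring

lemma logistic_pdf_mul_div_add (z x : ℝ) :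
    (exp (x - z) / (1 + exp (x - z)) ^ 2) * (exp (x + z) / (1 + exp (x + z)) ^ 2) /
        (exp (x - z) / (1 + exp (x - z)) ^ 2 + exp (x + z) / (1 + exp (x + z)) ^ 2) =
      (4 * (1 + cosh x * cosh z))⁻¹ := by
  have hsum := cosh_sq_add_cosh_sq ((x + z) / 2) ((x - z) / 2)
  rw [show (x + z) / 2 + (x - z) / 2 = x by ring, show (x + z) / 2 - (x - z) / 2 = z by ring]
    at hsum
  rw [logistic_pdf_eq, logistic_pdf_eq, ← hsum]
  have := cosh_pos ((x + z) / 2)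
  have := cosh_pos ((x - z) / 2)
  field_simp

/-- The potential `g` of the logistic density of scale `s`: that density is
`exp (-g |t|) / (4 s)`. -/
def logisticPotential (s t : ℝ) : ℝ :=
  2 * log ((exp (t / (2 * s)) + exp (-(t / (2 * s)))) / 2)

lemma logisticPotential_abs_div (s σ u : ℝ) :
    logisticPotential s (|u| / σ) = 2 * log (cosh (u / (2 * (σ * s)))) := by
  rw [logisticPotential, ← cosh_eq, ← cosh_abs, ← cosh_abs (u / _)]
  simp only [abs_div, abs_mul, abs_abs, abs_two]
  ring_nf

lemma one_sub_tanh_log_sub_log {A B : ℝ} (hA : 0 < A) (hB : 0 < B) :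
    1 - tanh (log A - log B) = 2 * B ^ 2 / (A ^ 2 + B ^ 2) := by
  rw [tanh_eq, neg_sub, exp_sub, exp_sub, exp_log hA, exp_log hB]
  field_simp
  ring

lemma kappa_logistic_integrand {s σ : ℝ} (hs : 0 < s) (hσ : 0 < σ) (z x : ℝ) :
    densLS (logisticPotential s) (4 * s) σ z x *
        (1 - tanh (Ffun (logisticPotential s) σ z x / 2)) =
      (2 * (σ * s) * (1 + cosh (x / (σ * s)) * cosh (z / (σ * s))))⁻¹ := by
  have hsum := cosh_sq_add_cosh_sq ((x + z) / (2 * (σ * s))) ((x - z) / (2 * (σ * s)))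
  rw [show (x + z) / (2 * (σ * s)) + (x - z) / (2 * (σ * s)) = x / (σ * s) by field_simp; ring,
    show (x + z) / (2 * (σ * s)) - (x - z) / (2 * (σ * s)) = z / (σ * s) by field_simp; ring]
    at hsum
  have hA := cosh_pos ((x + z) / (2 * (σ * s)))
  have hB := cosh_pos ((x - z) / (2 * (σ * s)))
  rw [densLS, dens, Ffun, abs_div, abs_of_pos hσ]
  simp only [logisticPotential_abs_div]
  rw [← mul_sub, mul_div_cancel_left₀ _ two_ne_zero,
    one_sub_tanh_log_sub_log hA hB, ← hsum, exp_neg, two_mul, exp_add, exp_log hB]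
  field_simp
  ring

lemma kappa_logistic_le {s σ : ℝ} (hs : 0 < s) (hσ : 0 < σ) (β βs : ℝ) :
    kappa (logisticPotential s) (4 * s) σ βs β ≤
      2 / (1 + cosh (min |β| |βs| / (σ * s))) := by
  have hc : 0 < σ * s := mul_pos hσ hs
  simp only [kappa, kappa_logistic_integrand hs hσ, mul_inv (2 * (σ * s))]
  rw [integral_const_mul]
  set w := min |β| |βs| / (σ * s)
  calc (2 * (σ * s))⁻¹ * ∫ x, (1 + cosh (x / (σ * s)) * cosh w)⁻¹
      ≤ (2 * (σ * s))⁻¹ * (4 * (σ * s) / (1 + cosh w)) := by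
        gcongr
        exact integral_inv_one_add_cosh_div_mul_cosh_le hc w
    _ = 2 / (1 + cosh w) := by
        field_simp
        ring

/-- Logistic contraction factor: with `f(x) = exp(x)/(1+exp(x))²` the
standard logistic density, the stated integral bound holds and is `< 1` for every `z > 0`;
consequently for the unit-variance logistic member of `F` (scale `σ₀ = √3/π`, i.e.
`g(t) = 2 log((e^{t/(2σ₀)} + e^{-t/(2σ₀)})/2)`, `C = 4σ₀`), the LS-EM contraction factor
satisfies the stated bound with `z = min(β, β*)`, for all `β, β* > 0`. -/
theorem stmt4 (σ : ℝ) (hσ : 0 < σ) :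
    (∀ z : ℝ, 0 < z →
      (2 * ∫ x : ℝ,
          (Real.exp (x - z) / (1 + Real.exp (x - z)) ^ 2) *
            (Real.exp (x + z) / (1 + Real.exp (x + z)) ^ 2) /
          (Real.exp (x - z) / (1 + Real.exp (x - z)) ^ 2 +
            Real.exp (x + z) / (1 + Real.exp (x + z)) ^ 2) ≤
        4 / (Real.exp z + Real.exp (-z) + 2)) ∧
      4 / (Real.exp z + Real.exp (-z) + 2) < 1) ∧
    (∀ β βs : ℝ, 0 < β → 0 < βs →
      kappa (fun t => 2 * Real.log ((Real.exp (t / (2 * (Real.sqrt 3 / π))) +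
            Real.exp (-(t / (2 * (Real.sqrt 3 / π))))) / 2))
          (4 * (Real.sqrt 3 / π)) σ βs β ≤
        4 * Real.exp (-(π * min β βs) / (σ * Real.sqrt 3)) /
          (1 + Real.exp (-(2 * π * min β βs) / (σ * Real.sqrt 3)) +
            2 * Real.exp (-(π * min β βs) / (σ * Real.sqrt 3)))) := by
  refine ⟨fun z hz => ⟨?_, ?_⟩, fun β βs hβ hβs => ?_⟩
  · simp only [logistic_pdf_mul_div_add, mul_inv (4 : ℝ), integral_const_mul]
    rw [four_div_exp_add_exp_neg_add_two]
    calc 2 * (4⁻¹ * ∫ x, (1 + cosh x * cosh z)⁻¹)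
        ≤ 2 * (4⁻¹ * (4 / (1 + cosh z))) := by
          gcongr
          exact integral_inv_one_add_cosh_mul_cosh_le z
      _ = 2 / (1 + cosh z) := by ring
  · rw [four_div_exp_add_exp_neg_add_two, div_lt_one (by positivity)]
    linarith [one_lt_cosh.2 hz.ne']
  · have hs : 0 < √3 / π := by positivity
    have hmin : min |β| |βs| = min β βs := by rw [abs_of_pos hβ, abs_of_pos hβs]
    have hscale : -(π * min β βs) / (σ * √3) = -(min β βs / (σ * (√3 / π))) := by
      field_simp
    have hscale2 :
        -(2 * π * min β βs) / (σ * √3) = 2 * -(min β βs / (σ * (√3 / π))) := by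
      field_simp
    refine (kappa_logistic_le hs hσ β βs).trans_eq ?_
    rw [hscale, hscale2, four_mul_exp_div_one_add_exp_two_mul_add, cosh_neg, hmin]
end
end

section
/- There exists an absolute constant C₀ > 0 with the following property. Let f ∈ F be a one-dimensional density, β* ≠ 0, σ > 0, and suppose the signal-to-noise ratio η = |β*|/σ satisfies η ≥ C₀. Consider the mis-specified (Gaussian-fit) LS-EM iteration β^{t+1} = E_{X ~ f_{β*,σ}}[X·tanh(β^t·X/σ²)]. Then from any nonzero initial point β⁰, the iterates converge to a limit β̄ with sign(β̄) = sign(β⁰) and |β̄ − sign(β⁰·β*)·β*| ≤ 10·σ. -/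
/-!
Let `X` have mean `B > 4σ` and variance at most `σ²`, and `M(b) = E[X tanh(bX/σ²)]`. The map `M`
is continuous and monotone (`x tanh(κx)` increases with `κ`), `M(b) ≤ E|X| ≤ B + σ²/(2B)`, and
`M(b) > b` on `(0, B - 2σ]`: for `b ≤ σ` by Chebyshev's inequality at radius `B/2` together with
`tanh t ≥ t/(1+t)`, and for `b ≥ σ` from the pointwise bound `x tanh(κx) ≥ x - 1/κ`, which gives
`M(b) ≥ B - σ²/b`. So the iterates from a positive start are monotone and bounded, and their limit
is a fixed point of `M` in `(B - 2σ, B + σ]`. Oddness of `M` in `b` and the symmetry of `f` take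
care of signs.
-/

open MeasureTheory Real Filter

noncomputable section

open Topology

namespace Real

theorem tanh_eq_one_sub (x : ℝ) : tanh x = 1 - 2 / (exp (2 * x) + 1) := by
  have h2x : exp (2 * x) = exp x * exp x := by rw [two_mul, exp_add]
  rw [tanh_eq, exp_neg, h2x]
  field_simp
  ring

theorem strictMono_tanh : StrictMono tanh := by
  intro a b hab
  rw [tanh_eq_one_sub, tanh_eq_one_sub]
  have : exp (2 * a) < exp (2 * b) := exp_lt_exp.2 (by linarith)
  gcongr

@[fun_prop]
theorem continuous_tanh : Continuous tanh := by
  rw [show tanh = fun x => sinh x / cosh x from funext tanh_eq_sinh_div_cosh]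
  exact continuous_sinh.div continuous_cosh fun x => (cosh_pos x).ne'

theorem tanh_nonneg {x : ℝ} (hx : 0 ≤ x) : 0 ≤ tanh x := by
  simpa using strictMono_tanh.monotone hx

theorem div_one_add_le_tanh {t : ℝ} (ht : 0 ≤ t) : t / (1 + t) ≤ tanh t := by
  rw [tanh_eq_one_sub, div_le_iff₀ (by positivity)]
  have h := add_one_le_exp (2 * t)
  have hpos : 0 < exp (2 * t) + 1 := by positivity
  rw [sub_mul, div_mul_eq_mul_div, le_sub_iff_add_le, ← le_sub_iff_add_le', div_le_iff₀ hpos]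
  nlinarith

theorem sign_mul_mul_eq_sign_mul_abs (a b : ℝ) : sign (a * b) * b = sign a * |b| := by
  rcases lt_trichotomy a 0 with ha | rfl | ha <;> rcases lt_trichotomy b 0 with hb | rfl | hb <;>
    simp [sign_of_pos, sign_of_neg, mul_pos_of_neg_of_neg, mul_neg_of_neg_of_pos,
      mul_neg_of_pos_of_neg, abs_of_neg, abs_of_pos, *]

section MulTanh

variable {κ : ℝ}

theorem mul_tanh_mul_eq_abs (κ x : ℝ) : x * tanh (κ * x) = |x| * tanh (κ * |x|) := by
  rcases abs_cases x with ⟨hx, -⟩ | ⟨hx, -⟩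
  · rw [hx]
  · rw [hx, mul_neg, tanh_neg, neg_mul_neg]

theorem mul_tanh_mul_nonneg (hκ : 0 ≤ κ) (x : ℝ) : 0 ≤ x * tanh (κ * x) := by
  rw [mul_tanh_mul_eq_abs]
  exact mul_nonneg (abs_nonneg x) (tanh_nonneg (by positivity))

theorem abs_mul_tanh_le (x a : ℝ) : |x * tanh a| ≤ |x| := by
  rw [abs_mul]
  exact mul_le_of_le_one_right (abs_nonneg x) (abs_tanh_lt_one a).le

theorem mul_tanh_mul_le_mul_tanh_mul {κ₁ κ₂ : ℝ} (h : κ₁ ≤ κ₂) (x : ℝ) :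
    x * tanh (κ₁ * x) ≤ x * tanh (κ₂ * x) := by
  rw [mul_tanh_mul_eq_abs κ₁, mul_tanh_mul_eq_abs κ₂]
  exact mul_le_mul_of_nonneg_left
    (strictMono_tanh.monotone (mul_le_mul_of_nonneg_right h (abs_nonneg x))) (abs_nonneg x)

theorem mul_tanh_mul_le_of_le_abs {r x : ℝ} (hκ : 0 ≤ κ) (hr : 0 ≤ r) (hrx : r ≤ |x|) :
    r * tanh (κ * r) ≤ x * tanh (κ * x) := by
  rw [mul_tanh_mul_eq_abs κ x]
  exact mul_le_mul hrx (strictMono_tanh.monotone (mul_le_mul_of_nonneg_left hrx hκ))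
    (tanh_nonneg (mul_nonneg hκ hr)) (abs_nonneg x)

theorem sub_inv_le_mul_tanh_mul (hκ : 0 < κ) (x : ℝ) : x - κ⁻¹ ≤ x * tanh (κ * x) := by
  rcases le_or_gt 0 x with hx | hx
  · have hκx : 0 ≤ κ * x := mul_nonneg hκ.le hx
    have h := mul_le_mul_of_nonneg_left (div_one_add_le_tanh hκx) hx
    have : x - κ⁻¹ ≤ x * (κ * x / (1 + κ * x)) := by
      rw [mul_div_assoc', le_div_iff₀ (by positivity), sub_mul, inv_mul_eq_div]
      field_simp
      nlinarith
    linarith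
  · have := mul_tanh_mul_nonneg hκ.le x
    have := inv_pos.2 hκ
    linarith

end MulTanh

end Real

theorem exists_tendsto_of_monotone_of_lt_map {H : ℝ → ℝ} (hmono : Monotone H)
    (hcont : Continuous H) {m a M : ℝ} (hma : m < a) (hM : ∀ b, H b ≤ M)
    (hlt : ∀ b, m < b → b ≤ a → b < H b) {u : ℕ → ℝ} (hu : ∀ n, u (n + 1) = H (u n))
    (hu0 : m < u 0) : ∃ L, Tendsto u atTop (𝓝 L) ∧ a < L ∧ L ≤ M := by
  have horbit : u = fun n => H^[n] (u 0) := by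
    funext n
    induction n with
    | zero => rfl
    | succ n ih => rw [hu, ih, Function.iterate_succ_apply']
  have hinv : ∀ n, m < u n := by
    intro n
    induction n with
    | zero => exact hu0
    | succ n ih =>
      rw [hu]
      rcases le_or_gt (u n) a with h | h
      · exact ih.trans (hlt _ ih h)
      · exact hma.trans ((hlt a hma le_rfl).trans_le (hmono h.le))
  obtain ⟨L, hL, hmL⟩ : ∃ L, Tendsto u atTop (𝓝 L) ∧ m < L := by
    rcases le_or_gt (u 0) (u 1) with h | h
    · have hu_mono : Monotone u := horbit ▸ hmono.monotone_iterate_of_le_map (hu 0 ▸ h)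
      have hbdd : BddAbove (Set.range u) := by
        refine ⟨max (u 0) M, ?_⟩
        rintro _ ⟨n, rfl⟩
        cases n with
        | zero => exact le_max_left _ _
        | succ n => exact (hu n ▸ hM (u n)).trans (le_max_right _ _)
      have hL := tendsto_atTop_ciSup hu_mono hbdd
      exact ⟨_, hL, hu0.trans_le (hu_mono.ge_of_tendsto hL 0)⟩
    · have hu_anti : Antitone u := horbit ▸ hmono.antitone_iterate_of_map_le (hu 0 ▸ h.le)
      have hau : ∀ n, a < u n := fun n => by
        by_contra! hle
        exact (hu_anti n.le_succ).not_gt (hu n ▸ hlt _ (hinv n) hle)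
      have hL := tendsto_atTop_ciInf hu_anti ⟨a, by rintro _ ⟨n, rfl⟩; exact (hau n).le⟩
      exact ⟨_, hL, hma.trans_le (ge_of_tendsto' hL fun n => (hau n).le)⟩
  have hfix : H L = L := isFixedPt_of_tendsto_iterate (horbit ▸ hL) hcont.continuousAt
  refine ⟨L, hL, ?_, hfix ▸ hM L⟩
  by_contra! hLa
  exact (hlt L hmL hLa).ne' hfix

section SecondMoment

variable {μ : Measure ℝ} [IsProbabilityMeasure μ] {B σ : ℝ}

theorem integrable_quadratic (hμ : MemLp id 2 μ) (α β γ : ℝ) :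
    Integrable (fun x => α + β * x + γ * (x - B) ^ 2) μ :=
  ((integrable_const α).add ((hμ.integrable one_le_two).const_mul β)).add
    ((hμ.sub (memLp_const B)).integrable_sq.const_mul γ)

theorem integral_quadratic (hμ : MemLp id 2 μ) (hmean : ∫ x, x ∂μ = B) (α β γ : ℝ) :
    ∫ x, (α + β * x + γ * (x - B) ^ 2) ∂μ = α + β * B + γ * ∫ x, (x - B) ^ 2 ∂μ := by
  have hx : Integrable (fun x => β * x) μ := (hμ.integrable one_le_two).const_mul β
  have hsq : Integrable (fun x => γ * (x - B) ^ 2) μ :=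
    (hμ.sub (memLp_const B)).integrable_sq.const_mul γ
  have hlin : Integrable (fun x => α + β * x) μ := (integrable_const α).add hx
  rw [integral_add hlin hsq, integral_add (integrable_const α) hx,
    integral_const_mul, integral_const_mul, hmean]
  simp

theorem integral_le_of_le_quadratic (hμ : MemLp id 2 μ) (hmean : ∫ x, x ∂μ = B)
    (hvar : ∫ x, (x - B) ^ 2 ∂μ ≤ σ ^ 2) {φ : ℝ → ℝ} (hφ : Integrable φ μ) {α β γ : ℝ}
    (hγ : 0 ≤ γ) (h : ∀ x, φ x ≤ α + β * x + γ * (x - B) ^ 2) :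
    ∫ x, φ x ∂μ ≤ α + β * B + γ * σ ^ 2 :=
  calc ∫ x, φ x ∂μ ≤ ∫ x, (α + β * x + γ * (x - B) ^ 2) ∂μ :=
        integral_mono hφ (integrable_quadratic hμ α β γ) h
    _ ≤ α + β * B + γ * σ ^ 2 := by
        rw [integral_quadratic hμ hmean]
        gcongr

theorem le_integral_of_quadratic_le (hμ : MemLp id 2 μ) (hmean : ∫ x, x ∂μ = B)
    (hvar : ∫ x, (x - B) ^ 2 ∂μ ≤ σ ^ 2) {φ : ℝ → ℝ} (hφ : Integrable φ μ) {α β γ : ℝ}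
    (hγ : γ ≤ 0) (h : ∀ x, α + β * x + γ * (x - B) ^ 2 ≤ φ x) :
    α + β * B + γ * σ ^ 2 ≤ ∫ x, φ x ∂μ :=
  calc α + β * B + γ * σ ^ 2 ≤ ∫ x, (α + β * x + γ * (x - B) ^ 2) ∂μ := by
        rw [integral_quadratic hμ hmean]
        gcongr _ + ?_
        exact mul_le_mul_of_nonpos_left hvar hγ
    _ ≤ ∫ x, φ x ∂μ := integral_mono (integrable_quadratic hμ α β γ) hφ h

end SecondMoment

def gaussianFitEM (μ : Measure ℝ) (σ b : ℝ) : ℝ := ∫ x, x * tanh (b / σ ^ 2 * x) ∂μ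

section GaussianFitEM

variable {μ : Measure ℝ} {B σ : ℝ}

theorem integrable_mul_tanh_mul (hμ : Integrable id μ) (κ : ℝ) :
    Integrable (fun x => x * tanh (κ * x)) μ :=
  hμ.norm.mono' (by fun_prop) (ae_of_all _ fun x => abs_mul_tanh_le x _)

theorem gaussianFitEM_neg (b : ℝ) : gaussianFitEM μ σ (-b) = -gaussianFitEM μ σ b := by
  simp only [gaussianFitEM, neg_div, neg_mul, tanh_neg, mul_neg, integral_neg]

theorem monotone_gaussianFitEM (hμ : Integrable id μ) : Monotone (gaussianFitEM μ σ) :=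
  fun _ _ h => integral_mono (integrable_mul_tanh_mul hμ _) (integrable_mul_tanh_mul hμ _)
    (mul_tanh_mul_le_mul_tanh_mul (div_le_div_of_nonneg_right h (sq_nonneg σ)))

theorem continuous_gaussianFitEM (hμ : Integrable id μ) : Continuous (gaussianFitEM μ σ) :=
  continuous_of_dominated (fun _ => by fun_prop)
    (fun _ => ae_of_all _ fun x => abs_mul_tanh_le x _) hμ.norm
    (ae_of_all _ fun _ => by fun_prop)

variable [IsProbabilityMeasure μ]

theorem gaussianFitEM_le (hμ : MemLp id 2 μ) (hmean : ∫ x, x ∂μ = B)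
    (hvar : ∫ x, (x - B) ^ 2 ∂μ ≤ σ ^ 2) (hB : 0 < B) (b : ℝ) :
    gaussianFitEM μ σ b ≤ B + σ ^ 2 / (2 * B) := by
  have h := integral_le_of_le_quadratic hμ hmean hvar
    (integrable_mul_tanh_mul (hμ.integrable one_le_two) (b / σ ^ 2))
    (α := 0) (β := 1) (γ := 1 / (2 * B)) (by positivity) fun x => by
      refine (le_abs_self _).trans ((abs_mul_tanh_le x _).trans ?_)
      rw [zero_add, one_mul, ← sub_le_iff_le_add', one_div_mul_eq_div, le_div_iff₀ (by positivity)]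
      rcases abs_cases x with ⟨hx, -⟩ | ⟨hx, -⟩ <;> rw [hx] <;> nlinarith [sq_nonneg (x + B)]
  exact h.trans_eq (by ring)

theorem tanh_mul_sub_le_gaussianFitEM (hμ : MemLp id 2 μ) (hmean : ∫ x, x ∂μ = B)
    (hvar : ∫ x, (x - B) ^ 2 ∂μ ≤ σ ^ 2) {b r : ℝ} (hb : 0 ≤ b) (hr : 0 < r) (hrB : 2 * r ≤ B) :
    tanh (b / σ ^ 2 * r) * (r - σ ^ 2 / r) ≤ gaussianFitEM μ σ b := by
  set t := tanh (b / σ ^ 2 * r)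
  have hκ : 0 ≤ b / σ ^ 2 := by positivity
  have ht : 0 ≤ t := tanh_nonneg (by positivity)
  have h := le_integral_of_quadratic_le hμ hmean hvar
    (integrable_mul_tanh_mul (hμ.integrable one_le_two) (b / σ ^ 2))
    (α := r * t) (β := 0) (γ := -(t / r)) (by simp only [neg_nonpos]; positivity) fun x => by
      rcases le_or_gt r |x| with hx | hx
      · have := mul_tanh_mul_le_of_le_abs hκ hr.le hx
        have : 0 ≤ t / r * (x - B) ^ 2 := by positivity
        linarith
      · have hxB : r ^ 2 ≤ (x - B) ^ 2 := by
          rw [← sq_abs (x - B)]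
          have : B - |x| ≤ |x - B| := by
            rw [abs_sub_comm]; linarith [abs_sub_abs_le_abs_sub B x, le_abs_self B]
          exact pow_le_pow_left₀ hr.le (by linarith) 2
        have : r * t ≤ t / r * (x - B) ^ 2 := by
          rw [div_mul_eq_mul_div, le_div_iff₀ hr]; nlinarith
        linarith [mul_tanh_mul_nonneg hκ x]
  rw [gaussianFitEM]
  convert h using 1
  field_simp
  ring

theorem sub_sq_div_le_gaussianFitEM (hμ : Integrable id μ) (hmean : ∫ x, x ∂μ = B)
    (hσ : σ ≠ 0) {b : ℝ} (hb : 0 < b) : B - σ ^ 2 / b ≤ gaussianFitEM μ σ b := by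
  have hκ : 0 < b / σ ^ 2 := by positivity
  calc B - σ ^ 2 / b = ∫ x, (x - (b / σ ^ 2)⁻¹) ∂μ := by
        rw [integral_sub (f := fun x => x) hμ (integrable_const _), hmean, inv_div]
        simp
    _ ≤ gaussianFitEM μ σ b :=
        integral_mono (hμ.sub (integrable_const _)) (integrable_mul_tanh_mul hμ _)
          (sub_inv_le_mul_tanh_mul hκ)

theorem lt_gaussianFitEM (hμ : MemLp id 2 μ) (hmean : ∫ x, x ∂μ = B)
    (hvar : ∫ x, (x - B) ^ 2 ∂μ ≤ σ ^ 2) (hσ : 0 < σ) (hB : 4 * σ < B) {b : ℝ} (hb : 0 < b)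
    (hbB : b ≤ B - 2 * σ) : b < gaussianFitEM μ σ b := by
  rcases le_or_gt b σ with hbσ | hσb
  · have h := tanh_mul_sub_le_gaussianFitEM hμ hmean hvar hb.le (half_pos (by linarith : 0 < B))
      (by linarith)
    set t := b / σ ^ 2 * (B / 2) with ht_def
    have hB0 : 0 < B := by linarith
    have ht := div_one_add_le_tanh (t := t) (by rw [ht_def]; positivity)
    have hσt : 2 * σ ^ 2 * t = b * B := by rw [ht_def]; field_simp
    have hD : B / 2 - σ ^ 2 / (B / 2) = (B ^ 2 - 4 * σ ^ 2) / (2 * B) := by field_simp; ring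
    have h1 : 4 * σ ^ 2 * (1 + t) < B ^ 2 - 4 * σ ^ 2 := by
      nlinarith [mul_pos (sub_pos.2 hB) (by positivity : 0 < B + 2 * σ)]
    have key : b < t / (1 + t) * (B / 2 - σ ^ 2 / (B / 2)) := by
      rw [hD, div_mul_div_comm, lt_div_iff₀ (by positivity)]
      refine lt_of_mul_lt_mul_left ?_ (by positivity : (0 : ℝ) ≤ 2 * σ ^ 2)
      rw [show 2 * σ ^ 2 * (t * (B ^ 2 - 4 * σ ^ 2)) = b * B * (B ^ 2 - 4 * σ ^ 2) by
        rw [← mul_assoc, hσt]]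
      nlinarith [mul_lt_mul_of_pos_left h1 (by positivity : 0 < b * B)]
    have hDpos : 0 < B / 2 - σ ^ 2 / (B / 2) := by
      rw [hD]; exact div_pos (by nlinarith) (by positivity)
    nlinarith
  · have h := sub_sq_div_le_gaussianFitEM (hμ.integrable one_le_two) hmean hσ.ne' hb
    have : σ ^ 2 / b ≤ σ := by rw [div_le_iff₀ hb]; nlinarith
    linarith

end GaussianFitEM

section GaussianFitEMConvergence

variable {μ : Measure ℝ} [IsProbabilityMeasure μ] {B σ : ℝ}

theorem exists_tendsto_gaussianFitEM (hμ : MemLp id 2 μ) (hmean : ∫ x, x ∂μ = B)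
    (hvar : ∫ x, (x - B) ^ 2 ∂μ ≤ σ ^ 2) (hσ : 0 < σ) (hB : 4 * σ < B) {u : ℕ → ℝ}
    (hu : ∀ n, u (n + 1) = gaussianFitEM μ σ (u n)) (hu0 : 0 < u 0) :
    ∃ L, Tendsto u atTop (𝓝 L) ∧ 0 < L ∧ |L - B| ≤ 2 * σ := by
  have hB0 : 0 < B := by linarith
  obtain ⟨L, hL, hlo, hhi⟩ := exists_tendsto_of_monotone_of_lt_map
    (monotone_gaussianFitEM (hμ.integrable one_le_two))
    (continuous_gaussianFitEM (hμ.integrable one_le_two)) (by linarith)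
    (gaussianFitEM_le hμ hmean hvar hB0)
    (fun _ hb hbB => lt_gaussianFitEM hμ hmean hvar hσ hB hb hbB) hu hu0
  have : σ ^ 2 / (2 * B) ≤ 2 * σ := by rw [div_le_iff₀ (by positivity)]; nlinarith
  exact ⟨L, hL, by linarith, abs_le.2 ⟨by linarith, by linarith⟩⟩

theorem exists_tendsto_gaussianFitEM_of_ne_zero (hμ : MemLp id 2 μ) (hmean : ∫ x, x ∂μ = B)
    (hvar : ∫ x, (x - B) ^ 2 ∂μ ≤ σ ^ 2) (hσ : 0 < σ) (hB : 4 * σ < B) {u : ℕ → ℝ}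
    (hu : ∀ n, u (n + 1) = gaussianFitEM μ σ (u n)) (hu0 : u 0 ≠ 0) :
    ∃ L, Tendsto u atTop (𝓝 L) ∧ sign L = sign (u 0) ∧ |L - sign (u 0) * B| ≤ 2 * σ := by
  rcases hu0.lt_or_gt with hneg | hpos
  · obtain ⟨L, hL, hL0, hLB⟩ := exists_tendsto_gaussianFitEM hμ hmean hvar hσ hB
      (u := fun n => -u n) (fun n => by rw [hu, gaussianFitEM_neg]) (neg_pos.2 hneg)
    refine ⟨-L, by simpa using hL.neg, ?_, ?_⟩
    · rw [sign_of_neg (neg_neg_of_pos hL0), sign_of_neg hneg]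
    · rwa [sign_of_neg hneg, ← abs_neg, neg_sub, neg_one_mul, sub_neg_eq_add, add_comm]
  · obtain ⟨L, hL, hL0, hLB⟩ := exists_tendsto_gaussianFitEM hμ hmean hvar hσ hB hu hpos
    exact ⟨L, hL, by rw [sign_of_pos hL0, sign_of_pos hpos], by rwa [sign_of_pos hpos, one_mul]⟩

end GaussianFitEMConvergence

section LocationScale

variable {g : ℝ → ℝ} {C σ β : ℝ}

theorem dens_neg (x : ℝ) : dens g C (-x) = dens g C x := by
  simp only [dens, abs_neg]

theorem densLS_neg (x : ℝ) : densLS g C σ (-β) x = densLS g C σ β (-x) := by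
  rw [densLS, densLS, show (x - -β) / σ = -((-x - β) / σ) by ring, dens_neg]

theorem integral_mul_dens_eq_zero : ∫ y, y * dens g C y = 0 := by
  have h := integral_neg_eq_self (fun y => y * dens g C y) volume
  simp only [dens_neg, neg_mul, integral_neg] at h
  linarith

theorem densLS_mul_eq (hσ : σ ≠ 0) (φ : ℝ → ℝ) (x : ℝ) :
    densLS g C σ β x * φ x =
      σ⁻¹ * (dens g C ((x - β) / σ) * φ (σ * ((x - β) / σ) + β)) := by
  rw [mul_div_cancel₀ _ hσ, sub_add_cancel, densLS, one_div, mul_assoc]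

theorem integral_densLS_mul (hσ : 0 < σ) (φ : ℝ → ℝ) :
    ∫ x, densLS g C σ β x * φ x = ∫ y, dens g C y * φ (σ * y + β) := by
  simp_rw [densLS_mul_eq hσ.ne' φ]
  rw [integral_sub_right_eq_self (fun x => σ⁻¹ * (dens g C (x / σ) * φ (σ * (x / σ) + β))) β,
    Measure.integral_comp_div (fun y => σ⁻¹ * (dens g C y * φ (σ * y + β))) σ,
    integral_const_mul, abs_of_pos hσ, smul_eq_mul, mul_inv_cancel_left₀ hσ.ne']

theorem Integrable.densLS_mul (hσ : 0 < σ) {φ : ℝ → ℝ}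
    (h : Integrable fun y => dens g C y * φ (σ * y + β)) :
    Integrable fun x => densLS g C σ β x * φ x := by
  simp_rw [densLS_mul_eq hσ.ne' φ]
  exact ((integrable_comp_div_iff _ hσ.ne').2 (h.const_mul σ⁻¹)).comp_sub_right β

theorem densLS_nonneg (hF : InClassF g C) (hσ : 0 < σ) (x : ℝ) : 0 ≤ densLS g C σ β x := by
  have := hF.C_pos
  unfold densLS dens
  positivity

theorem InClassF.integrable_dens (hF : InClassF g C) : Integrable (dens g C) := by
  by_contra h
  simpa [integral_undef h] using hF.integral_one

theorem InClassF.integrable_sq_mul_dens (hF : InClassF g C) :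
    Integrable fun x => x ^ 2 * dens g C x := by
  by_contra h
  simpa [integral_undef h] using hF.variance_one

theorem integrable_densLS (hF : InClassF g C) (hσ : 0 < σ) : Integrable (densLS g C σ β) := by
  simpa using Integrable.densLS_mul hσ (φ := fun _ => 1) (by simpa using hF.integrable_dens)

theorem integral_densLS (hF : InClassF g C) (hσ : 0 < σ) : ∫ x, densLS g C σ β x = 1 := by
  simpa [hF.integral_one] using integral_densLS_mul (g := g) (C := C) (β := β) hσ fun _ => 1

theorem integral_densLS_abs_mul (β : ℝ) {φ : ℝ → ℝ} (hφ : ∀ x, φ (-x) = φ x) :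
    ∫ x, densLS g C σ |β| x * φ x = ∫ x, densLS g C σ β x * φ x := by
  rcases abs_cases β with ⟨hβ, -⟩ | ⟨hβ, -⟩
  · rw [hβ]
  · rw [hβ, ← integral_neg_eq_self]
    simp only [densLS_neg, neg_neg, hφ]

def densLSMeasure (g : ℝ → ℝ) (C σ β : ℝ) : Measure ℝ :=
  volume.withDensity fun x => ENNReal.ofReal (densLS g C σ β x)

theorem integral_densLSMeasure (hF : InClassF g C) (hσ : 0 < σ) (φ : ℝ → ℝ) :
    ∫ x, φ x ∂densLSMeasure g C σ β = ∫ x, densLS g C σ β x * φ x := by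
  rw [densLSMeasure, integral_withDensity_eq_integral_toReal_smul₀
    (integrable_densLS hF hσ).aemeasurable.ennreal_ofReal
    (ae_of_all _ fun _ => ENNReal.ofReal_lt_top)]
  simp only [ENNReal.toReal_ofReal (densLS_nonneg hF hσ _), smul_eq_mul]

theorem integrable_densLSMeasure_iff (hF : InClassF g C) (hσ : 0 < σ) {φ : ℝ → ℝ} :
    Integrable φ (densLSMeasure g C σ β) ↔ Integrable fun x => densLS g C σ β x * φ x := by
  rw [densLSMeasure, integrable_withDensity_iff_integrable_smul₀'
    (integrable_densLS hF hσ).aemeasurable.ennreal_ofReal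
    (ae_of_all _ fun _ => ENNReal.ofReal_lt_top)]
  simp only [ENNReal.toReal_ofReal (densLS_nonneg hF hσ _), smul_eq_mul]

theorem isProbabilityMeasure_densLSMeasure (hF : InClassF g C) (hσ : 0 < σ) :
    IsProbabilityMeasure (densLSMeasure g C σ β) := by
  constructor
  rw [densLSMeasure, withDensity_apply _ MeasurableSet.univ, Measure.restrict_univ,
    ← ofReal_integral_eq_lintegral_ofReal (integrable_densLS hF hσ)
      (ae_of_all _ (densLS_nonneg hF hσ)), integral_densLS hF hσ, ENNReal.ofReal_one]

theorem integral_sub_sq_densLSMeasure (hF : InClassF g C) (hσ : 0 < σ) :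
    ∫ x, (x - β) ^ 2 ∂densLSMeasure g C σ β = σ ^ 2 := by
  rw [integral_densLSMeasure hF hσ, integral_densLS_mul hσ]
  simp only [add_sub_cancel_right, mul_pow, mul_left_comm (dens g C _)]
  rw [integral_const_mul]
  simp only [mul_comm (dens g C _), hF.variance_one, mul_one]

theorem memLp_id_densLSMeasure (hF : InClassF g C) (hσ : 0 < σ) :
    MemLp id 2 (densLSMeasure g C σ β) := by
  have := isProbabilityMeasure_densLSMeasure (β := β) hF hσ
  have h : MemLp (fun x => x - β) 2 (densLSMeasure g C σ β) := by
    refine (memLp_two_iff_integrable_sq (by fun_prop)).2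
      ((integrable_densLSMeasure_iff hF hσ).2 (Integrable.densLS_mul hσ ?_))
    refine (hF.integrable_sq_mul_dens.const_mul (σ ^ 2)).congr (ae_of_all _ fun y => ?_)
    simp only [add_sub_cancel_right]
    ring
  convert h.add (memLp_const β) using 1
  funext x
  simp

theorem integral_id_densLSMeasure (hF : InClassF g C) (hσ : 0 < σ) :
    ∫ x, x ∂densLSMeasure g C σ β = β := by
  have := isProbabilityMeasure_densLSMeasure (β := β) hF hσ
  have hI : Integrable (fun x => x) (densLSMeasure g C σ β) :=
    (memLp_id_densLSMeasure hF hσ).integrable one_le_two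
  calc ∫ x, x ∂densLSMeasure g C σ β = ∫ x, (x - β) ∂densLSMeasure g C σ β + β := by
        rw [integral_sub hI (integrable_const β)]
        simp
    _ = β := by
        rw [integral_densLSMeasure hF hσ, integral_densLS_mul hσ]
        simp only [add_sub_cancel_right, mul_left_comm (dens g C _)]
        rw [integral_const_mul]
        simp only [mul_comm (dens g C _), integral_mul_dens_eq_zero, mul_zero, zero_add]

end LocationScale

/-- Fit with 2GMM: there is an absolute constant `C₀ > 0` such that for
any `f ∈ F`, `β* ≠ 0`, `σ > 0` with SNR `η = |β*|/σ ≥ C₀`, the mis-specified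
(Gaussian-fit) LS-EM iteration `β^{t+1} = E_{X ~ f_{β*,σ}}[X tanh(β^t X/σ²)]` converges
from any nonzero `β⁰` to a limit `β̄` with `sign(β̄) = sign(β⁰)` and
`|β̄ - sign(β⁰β*)β*| ≤ 10σ`. -/
theorem stmt18 :
    ∃ C₀ : ℝ, 0 < C₀ ∧
      ∀ (g : ℝ → ℝ) (C σ βs : ℝ), 0 < σ → InClassF g C → βs ≠ 0 →
        C₀ ≤ |βs| / σ →
        ∀ (β0 : ℝ), β0 ≠ 0 →
        ∀ (seq : ℕ → ℝ), seq 0 = β0 →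
          (∀ t : ℕ, seq (t + 1) =
            ∫ x : ℝ, densLS g C σ βs x * (x * Real.tanh (seq t * x / σ ^ 2))) →
          ∃ βbar : ℝ, Tendsto seq atTop (nhds βbar) ∧
            Real.sign βbar = Real.sign β0 ∧
            |βbar - Real.sign (β0 * βs) * βs| ≤ 10 * σ := by
  refine ⟨5, by norm_num, fun g C σ βs hσ hF _ hη β0 hβ0 seq h0 hrec => ?_⟩
  have := isProbabilityMeasure_densLSMeasure (β := |βs|) hF hσ
  have hB : 4 * σ < |βs| := by rw [le_div_iff₀ hσ] at hη; linarith
  have hrec' : ∀ t, seq (t + 1) = gaussianFitEM (densLSMeasure g C σ |βs|) σ (seq t) := by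
    intro t
    rw [hrec, ← integral_densLS_abs_mul βs fun x => by
      rw [mul_neg, neg_div, tanh_neg, neg_mul_neg], ← integral_densLSMeasure hF hσ]
    simp only [gaussianFitEM, mul_div_right_comm]
  obtain ⟨L, hL, hsign, hdist⟩ := exists_tendsto_gaussianFitEM_of_ne_zero
    (memLp_id_densLSMeasure hF hσ) (integral_id_densLSMeasure hF hσ)
    (integral_sub_sq_densLSMeasure hF hσ).le hσ hB hrec' (h0 ▸ hβ0)
  refine ⟨L, hL, h0 ▸ hsign, ?_⟩
  rw [sign_mul_mul_eq_sign_mul_abs, ← h0]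
  linarith
end
end
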